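/- Let μ = δ_0 + Σ_j c_j δ_{x_j}, where {Q_j} is a countable collection of cubes in ℝ^n all containing the origin such that for each j there is x_j ∈ Q_j with x_j ∉ Q_k for k ≠ j, and {c_j} is a sequence of positive numbers with Σ_j c_j = ∞ and c_j → 0. Then for every α ∈ (0,1), the measure of the set {x : M_μ χ_{\{0\}}(x) > α} is infinite relative to μ({0}) = 1; in particular sup_E μ({M_μ χ_E > α})/μ(E) = ∞ for every α ∈ (0,1), so M_μ satisfies no Tauberian estimate and is unbounded on L^p(μ) for all p < ∞. -/

import Mathlib

open MeasureTheory Metric Set Filter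
open scoped ENNReal

/-- The uncentered Hardy–Littlewood maximal operator over axis-parallel cubes
(closed balls in the sup metric), with respect to a measure μ. -/
noncomputable def maxOpMu {n : ℕ} (μ : Measure (Fin n → ℝ)) (f : (Fin n → ℝ) → ℝ≥0∞)
    (x : Fin n → ℝ) : ℝ≥0∞ :=
  ⨆ (c : Fin n → ℝ) (r : ℝ) (_ : 0 < r) (_ : x ∈ closedBall c r)
    (_ : 0 < μ (closedBall c r)),
    (∫⁻ y in closedBall c r, f y ∂μ) / μ (closedBall c r)

/-!
Each cube `Q_j` contains the unit atom at `0` and exactly one further atom, of mass `c_j`, so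
`{0}` has density `(1 + c_j)⁻¹ → 1` in `Q_j`. Hence for every `α < 1` all but finitely many of
the atoms `x_j` lie in a cube where `{0}` has density `> α`; these atoms carry the infinite mass
`∑_{j ≥ N} c_j`. With `α = 1/2` the maximal function of `χ_{0}` is `≥ 1/2` on a set of infinite
measure, whereas `χ_{0}` has `L^p` norm `1`.
-/

theorem ENNReal.tsum_ofReal_eq_top_of_not_summable {ι : Type*} {c : ι → ℝ} (hc : ∀ i, 0 ≤ c i)
    (h : ¬ Summable c) : ∑' i, ENNReal.ofReal (c i) = ⊤ :=
  ENNReal.tsum_coe_eq_top_iff_not_summable_coe.mpr <| by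
    simpa only [Real.coe_toNNReal _ (hc _)] using h

theorem preimage_eq_singleton_of_mem_of_notMem {X : Type*} {x : ℕ → X} {Q : ℕ → Set X}
    (hxin : ∀ j, x j ∈ Q j) (hxout : ∀ j k, j ≠ k → x j ∉ Q k) (j : ℕ) : x ⁻¹' Q j = {j} := by
  ext k
  exact ⟨fun hk => by_contra fun hkj => hxout k j hkj hk, fun hk => hk ▸ hxin j⟩

section PointMasses

variable {X : Type*} [MeasurableSpace X] [MeasurableSingletonClass X] (x : ℕ → X)
  (w : ℕ → ℝ≥0∞)

theorem sum_smul_dirac_apply (s : Set X) :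
    Measure.sum (fun j => w j • Measure.dirac (x j)) s = ∑' j, (x ⁻¹' s).indicator w j := by
  rw [Measure.sum_apply_of_countable]
  refine tsum_congr fun j => ?_
  by_cases hj : x j ∈ s <;> simp [Measure.dirac_apply, hj]

theorem sum_smul_dirac_image_Ici_eq_top {N : ℕ} (hw : ∑' k, w (k + N) = ⊤) :
    Measure.sum (fun j => w j • Measure.dirac (x j)) (x '' Ici N) = ⊤ := by
  refine top_le_iff.mp (hw ▸ ?_)
  rw [sum_smul_dirac_apply]
  refine le_of_eq_of_le ?_ (ENNReal.tsum_comp_le_tsum_of_injective (add_left_injective N) _)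
  refine tsum_congr fun k => (Set.indicator_of_mem ?_ w).symm
  exact Set.mem_image_of_mem x (Nat.le_add_left N k)

variable {x} {o : X}

theorem dirac_add_sum_smul_dirac_apply_singleton (hx : ∀ j, x j ≠ o) :
    (Measure.dirac o + Measure.sum fun j => w j • Measure.dirac (x j)) {o} = 1 := by
  rw [Measure.add_apply, sum_smul_dirac_apply, Measure.dirac_apply_of_mem (mem_singleton o),
    ENNReal.tsum_eq_zero.mpr fun j => Set.indicator_of_notMem (s := x ⁻¹' {o}) (hx j) w,
    add_zero]

theorem dirac_add_sum_smul_dirac_apply_of_preimage_eq_singleton {s : Set X} {j : ℕ}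
    (ho : o ∈ s) (hs : x ⁻¹' s = {j}) :
    (Measure.dirac o + Measure.sum fun i => w i • Measure.dirac (x i)) s = 1 + w j := by
  rw [Measure.add_apply, sum_smul_dirac_apply, hs, Measure.dirac_apply_of_mem ho]
  simp

end PointMasses

theorem lintegral_rpow_eq_top_of_le {X : Type*} [MeasurableSpace X] {μ : Measure X}
    {g : X → ℝ≥0∞} {T : Set X} {a : ℝ≥0∞} {p : ℝ} (hT : MeasurableSet T) (hμT : μ T = ⊤)
    (ha : a ≠ 0) (hp : 0 ≤ p) (hg : ∀ y ∈ T, a ≤ g y) : ∫⁻ y, g y ^ p ∂μ = ⊤ := by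
  have hap : a ^ p ≠ 0 := by simp [ENNReal.rpow_eq_zero_iff, ha, hp.not_gt]
  refine top_le_iff.mp ?_
  calc ⊤ = ∫⁻ _ in T, a ^ p ∂μ := by rw [setLIntegral_const, hμT, ENNReal.mul_top hap]
    _ ≤ ∫⁻ y in T, g y ^ p ∂μ :=
      setLIntegral_mono' hT fun y hy => ENNReal.rpow_le_rpow (hg y hy) hp
    _ ≤ ∫⁻ y, g y ^ p ∂μ := setLIntegral_le_lintegral T _

theorem lintegral_indicator_one_rpow {X : Type*} [MeasurableSpace X] {μ : Measure X}
    {E : Set X} {p : ℝ} (hE : MeasurableSet E) (hp : 0 < p) :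
    ∫⁻ y, E.indicator (1 : X → ℝ≥0∞) y ^ p ∂μ = μ E := by
  have h : (fun y => E.indicator (1 : X → ℝ≥0∞) y ^ p) = E.indicator 1 := by
    funext y
    by_cases hy : y ∈ E <;> simp [hy, hp]
  rw [h, lintegral_indicator_one hE]

theorem eventually_ofReal_mul_one_add_lt_one {w : ℕ → ℝ≥0∞} (hw : Tendsto w atTop (nhds 0))
    {α : ℝ} (hα : α < 1) : ∀ᶠ j in atTop, ENNReal.ofReal α * (1 + w j) < 1 := by
  have h : Tendsto (fun j => ENNReal.ofReal α * (1 + w j)) atTop (nhds (ENNReal.ofReal α)) := by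
    simpa using ENNReal.Tendsto.const_mul ((tendsto_const_nhds (x := 1)).add hw) (.inl (by simp))
  exact h.eventually_lt_const (by simpa using hα)

section MaximalFunction

variable {n : ℕ} {μ : Measure (Fin n → ℝ)}

/-- The superlevel set `{M_μ χ_E > α}`, written without division. -/
def highDensitySet (μ : Measure (Fin n → ℝ)) (E : Set (Fin n → ℝ)) (α : ℝ) :
    Set (Fin n → ℝ) :=
  {y | ∃ (cc : Fin n → ℝ) (r : ℝ), 0 < r ∧ y ∈ closedBall cc r ∧
    0 < μ (closedBall cc r) ∧ ENNReal.ofReal α * μ (closedBall cc r) < μ (closedBall cc r ∩ E)}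

theorem setLIntegral_div_le_maxOpMu {f : (Fin n → ℝ) → ℝ≥0∞} {y cc : Fin n → ℝ} {r : ℝ}
    (hr : 0 < r) (hy : y ∈ closedBall cc r) (hμ : 0 < μ (closedBall cc r)) :
    (∫⁻ z in closedBall cc r, f z ∂μ) / μ (closedBall cc r) ≤ maxOpMu μ f y := by
  refine le_iSup_of_le cc (le_iSup_of_le r ?_)
  rw [iSup_pos hr, iSup_pos hy, iSup_pos hμ]

theorem ofReal_le_maxOpMu_indicator {E : Set (Fin n → ℝ)} {α : ℝ} {y : Fin n → ℝ}
    (hE : MeasurableSet E) (hy : y ∈ highDensitySet μ E α) :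
    ENNReal.ofReal α ≤ maxOpMu μ (E.indicator 1) y := by
  obtain ⟨cc, r, hr, hyB, hμB, hdense⟩ := hy
  refine le_trans ?_ (setLIntegral_div_le_maxOpMu hr hyB hμB)
  rw [lintegral_indicator_one hE, Measure.restrict_apply hE, Set.inter_comm]
  rcases eq_or_ne (μ (closedBall cc r)) ⊤ with htop | htop
  · have hα : ENNReal.ofReal α = 0 := by
      by_contra hα
      rw [htop, ENNReal.mul_top hα] at hdense
      exact not_top_lt hdense
    exact hα ▸ zero_le
  · exact (ENNReal.le_div_iff_mul_le (.inl hμB.ne') (.inl htop)).mpr hdense.le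

theorem lintegral_rpow_maxOpMu_indicator_eq_top {E T : Set (Fin n → ℝ)} {α p : ℝ}
    (hE : MeasurableSet E) (hα : 0 < α) (hT : MeasurableSet T) (hμT : μ T = ⊤)
    (hTE : T ⊆ highDensitySet μ E α) (hp : 0 ≤ p) :
    ∫⁻ y, maxOpMu μ (E.indicator 1) y ^ p ∂μ = ⊤ :=
  lintegral_rpow_eq_top_of_le hT hμT (ENNReal.ofReal_pos.mpr hα).ne' hp
    fun _ hy => ofReal_le_maxOpMu_indicator hE (hTE hy)

theorem image_Ici_subset_highDensitySet {q x : ℕ → Fin n → ℝ} {ρ : ℕ → ℝ} {w : ℕ → ℝ≥0∞}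
    {E : Set (Fin n → ℝ)} (hρ : ∀ j, 0 < ρ j) (hE : ∀ j, E ⊆ closedBall (q j) (ρ j))
    (hxin : ∀ j, x j ∈ closedBall (q j) (ρ j)) (hμE : μ E = 1)
    (hcube : ∀ j, μ (closedBall (q j) (ρ j)) = 1 + w j) (hw : Tendsto w atTop (nhds 0))
    {α : ℝ} (hα : α < 1) : ∃ N, x '' Ici N ⊆ highDensitySet μ E α := by
  obtain ⟨N, hN⟩ := eventually_atTop.mp (eventually_ofReal_mul_one_add_lt_one hw hα)
  refine ⟨N, ?_⟩
  rintro _ ⟨j, hj, rfl⟩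
  refine ⟨q j, ρ j, hρ j, hxin j, by simp [hcube], ?_⟩
  rw [Set.inter_eq_right.mpr (hE j), hμE, hcube]
  exact hN j hj

end MaximalFunction

/-- Let μ = δ₀ + Σ_j c_j δ_{x_j}, where {Q_j} are cubes all containing the origin, x_j ∈ Q_j
but x_j ∉ Q_k for k ≠ j, and c_j > 0 with Σ c_j = ∞ and c_j → 0.  Then μ({0}) = 1 while for
every α ∈ (0,1) the set {M_μ χ_{{0}} > α} has infinite μ-measure; hence the sharp Tauberian
constant of M_μ is infinite for every α ∈ (0,1) and M_μ is unbounded on L^p(μ) for all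
p < ∞. -/
theorem no_tauberian_for_bad_measure (n : ℕ)
    (q : ℕ → (Fin n → ℝ)) (ρ : ℕ → ℝ) (hρ : ∀ j, 0 < ρ j)
    (x : ℕ → (Fin n → ℝ))
    (h0 : ∀ j, (0 : Fin n → ℝ) ∈ closedBall (q j) (ρ j))
    (hxin : ∀ j, x j ∈ closedBall (q j) (ρ j))
    (hxout : ∀ j k, j ≠ k → x j ∉ closedBall (q k) (ρ k))
    (c : ℕ → ℝ) (hc : ∀ j, 0 < c j) (hdiv : ¬ Summable c)
    (hto0 : Tendsto c atTop (nhds 0))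
    (μ : Measure (Fin n → ℝ))
    (hμ : μ = Measure.dirac 0 +
      Measure.sum (fun j => (ENNReal.ofReal (c j)) • Measure.dirac (x j))) :
    μ {(0 : Fin n → ℝ)} = 1 ∧
    (∀ α : ℝ, 0 < α → α < 1 →
      μ {y | ∃ (cc : Fin n → ℝ) (r : ℝ), 0 < r ∧ y ∈ closedBall cc r ∧
          0 < μ (closedBall cc r) ∧
          ENNReal.ofReal α * μ (closedBall cc r) <
            μ (closedBall cc r ∩ {(0 : Fin n → ℝ)})} = ⊤) ∧
    (∀ p : ℝ, 1 ≤ p → ¬ ∃ K : ℝ≥0∞, K < ⊤ ∧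
      ∀ f : (Fin n → ℝ) → ℝ≥0∞, Measurable f →
        (∫⁻ y, (maxOpMu μ f y) ^ p ∂μ) ≤ K * ∫⁻ y, (f y) ^ p ∂μ) := by
  set w : ℕ → ℝ≥0∞ := fun j => ENNReal.ofReal (c j)
  have hx0 : ∀ j, x j ≠ 0 := fun j h => hxout j (j + 1) (by omega) (h ▸ h0 (j + 1))
  have hμ0 : μ {0} = 1 := hμ ▸ dirac_add_sum_smul_dirac_apply_singleton w hx0
  have hcube : ∀ j, μ (closedBall (q j) (ρ j)) = 1 + w j := fun j =>
    hμ ▸ dirac_add_sum_smul_dirac_apply_of_preimage_eq_singleton w (h0 j)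
      (preimage_eq_singleton_of_mem_of_notMem hxin hxout j)
  have htail : ∀ N, μ (x '' Ici N) = ⊤ := fun N => by
    rw [hμ, Measure.add_apply, sum_smul_dirac_image_Ici_eq_top x w
      (ENNReal.tsum_ofReal_eq_top_of_not_summable (fun k => (hc _).le)
        ((summable_nat_add_iff N).not.mpr hdiv)), add_top]
  have hdense : ∀ α : ℝ, α < 1 → ∃ N, x '' Ici N ⊆ highDensitySet μ {0} α :=
    fun α => image_Ici_subset_highDensitySet hρ (fun j => singleton_subset_iff.mpr (h0 j)) hxin
      hμ0 hcube (by simpa [w] using ENNReal.tendsto_ofReal hto0)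
  refine ⟨hμ0, fun α _ hα => ?_, fun p hp ⟨K, hK, hbound⟩ => ?_⟩
  · obtain ⟨N, hN⟩ := hdense α hα
    exact measure_mono_top hN (htail N)
  · obtain ⟨N, hN⟩ := hdense (1 / 2) (by norm_num)
    have hM := lintegral_rpow_maxOpMu_indicator_eq_top (measurableSet_singleton 0)
      (by norm_num) ((Ici N).to_countable.image x).measurableSet (htail N) hN (by linarith)
    have := hbound _ (measurable_one.indicator (measurableSet_singleton 0))
    rw [hM, lintegral_indicator_one_rpow (measurableSet_singleton 0) (by linarith), hμ0,
      mul_one] at this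
    exact hK.ne (top_le_iff.mp this)
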